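/- arXiv:2512.11405 — 6 statements merged into one kernel-verified Lean document; each statement's English description precedes it below -/
import Mathlib

section
/- For any sequences (a_k) and (b_m) of real numbers, if b_m = ∑_{k=0}^m C(m,k) a_k for all m, and both power series ∑_{m≥0} b_m (x/(1+x))^{m+1} and ∑_{k≥0} a_k x^{k+1} converge for x in (0,r) for some r>0, then ∑_{m≥0} b_m (x/(1+x))^{m+1} = ∑_{k≥0} a_k x^{k+1} for all x in (0,r) small enough that both series converge absolutely. -/
open Finset in
lemma key_hasSum (k : ℕ) {x : ℝ} (hx : 0 < x) :
    HasSum (fun m => (m.choose k : ℝ) * (x / (1 + x)) ^ (m + 1)) (x ^ (k + 1)) := by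
  set y := x / (1 + x) with hy
  have h1x : 0 < 1 + x := by linarith
  have hy0 : 0 < y := div_pos hx h1x
  have hy1 : y < 1 := by rw [hy, div_lt_one h1x]; linarith
  have hyn : ‖y‖ < 1 := by rw [Real.norm_eq_abs, abs_of_pos hy0]; exact hy1
  have h1y : 1 - y = 1 / (1 + x) := by
    field_simp [hy]
    rw [sub_mul, hy, div_mul_cancel₀ _ h1x.ne']; ring
  have hx' : x = y / (1 - y) := by
    rw [h1y, hy]; field_simp
  have H := (hasSum_choose_mul_geometric_of_norm_lt_one k hyn).mul_right (y ^ (k + 1))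
  have Hval : 1 / (1 - y) ^ (k + 1) * y ^ (k + 1) = x ^ (k + 1) := by
    have hxx : x ^ (k + 1) = (y / (1 - y)) ^ (k + 1) := by rw [← hx']
    rw [hxx]
    conv_rhs => rw [div_pow]
    rw [one_div, inv_mul_eq_div]
  rw [Hval] at H
  have Hfun : (fun n : ℕ => ((n + k).choose k : ℝ) * y ^ n * y ^ (k + 1))
      = fun n : ℕ => ((n + k).choose k : ℝ) * y ^ (n + k + 1) := by
    funext n; rw [mul_assoc, ← pow_add]; ring_nf
  rw [Hfun] at H
  have hinj : Function.Injective (fun n : ℕ => n + k) := add_left_injective k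
  rw [← hinj.hasSum_iff (f := fun m => (m.choose k : ℝ) * y ^ (m + 1))]
  · exact H
  · intro m hm
    have : m < k := by
      by_contra h
      exact hm ⟨m - k, by simp; omega⟩
    simp [Nat.choose_eq_zero_of_lt this]

theorem stmt_2 (a b : ℕ → ℝ) (r : ℝ) (hr : 0 < r)
    (hb : ∀ m, b m = ∑ k ∈ Finset.range (m + 1), (m.choose k : ℝ) * a k)
    (hsb : ∀ x ∈ Set.Ioo (0 : ℝ) r,
      Summable (fun m => |b m * (x / (1 + x)) ^ (m + 1)|))
    (hsa : ∀ x ∈ Set.Ioo (0 : ℝ) r, Summable (fun k => |a k * x ^ (k + 1)|)) :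
    ∀ x ∈ Set.Ioo (0 : ℝ) r,
      ∑' m, b m * (x / (1 + x)) ^ (m + 1) = ∑' k, a k * x ^ (k + 1) := by
  intro x hx
  obtain ⟨hx0, hxr⟩ := hx
  set y := x / (1 + x) with hy
  have h1x : 0 < 1 + x := by linarith
  have hy0 : 0 < y := div_pos hx0 h1x
  set f : ℕ × ℕ → ℝ := fun p => (p.2.choose p.1 : ℝ) * a p.1 * y ^ (p.2 + 1) with hf
  -- summability of |f|
  have habs : ∀ k, HasSum (fun m => |f (k, m)|) (|a k| * x ^ (k + 1)) := by
    intro k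
    have := (key_hasSum k hx0).mul_left |a k|
    convert this using 2 with m
    · rfl
    · simp only [hf, abs_mul]
      rw [abs_of_nonneg (by positivity : (0:ℝ) ≤ (m.choose k : ℝ)),
        abs_of_nonneg (by positivity : (0:ℝ) ≤ y ^ (m + 1))]
      ring
  have hsumabs : Summable (fun p => |f p|) := by
    rw [summable_prod_of_nonneg (fun p => abs_nonneg _)]
    constructor
    · exact fun k => (habs k).summable
    · have : (fun k => ∑' m, |f (k, m)|) = fun k => |a k * x ^ (k + 1)| := by
        funext k
        rw [(habs k).tsum_eq, abs_mul, abs_of_nonneg (by positivity : (0:ℝ) ≤ x ^ (k+1))]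
      rw [this]
      exact hsa x ⟨hx0, hxr⟩
  have hsumf : Summable f := by
    rw [← summable_abs_iff]; exact hsumabs
  calc ∑' m, b m * y ^ (m + 1)
      = ∑' m, ∑' k, f (k, m) := by
        apply tsum_congr; intro m
        rw [tsum_eq_sum (s := Finset.range (m + 1))
          (by intro k hk
              simp only [Finset.mem_range, not_lt] at hk
              simp [hf, Nat.choose_eq_zero_of_lt (by omega : m < k)])]
        rw [hb m, Finset.sum_mul]
    _ = ∑' k, ∑' m, f (k, m) := by
        exact Summable.tsum_comm' hsumf
          (fun k => summable_abs_iff.mp (habs k).summable)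
          (fun m => summable_of_ne_finset_zero (s := Finset.range (m + 1))
            (fun k hk => by
              simp only [Finset.mem_range, not_lt] at hk
              simp [hf, Nat.choose_eq_zero_of_lt (by omega : m < k)]))
    _ = ∑' k, a k * x ^ (k + 1) := by
        apply tsum_congr; intro k
        have := ((key_hasSum k hx0).mul_left (a k))
        have h2 : HasSum (fun m => f (k, m)) (a k * x ^ (k + 1)) := by
          convert this using 2 with m; rfl; simp [hf]; ring
        exact h2.tsum_eq
end

section
/- Define P_m(s) = ∑_{k=0}^m C(m,k) (-1)^k 2^{k+1} (s)_k / k!, where (s)_k = s(s+1)⋯(s+k-1) is the Pochhammer symbol. Then for complex s with 0 < Re(s) < 1 and every m ≥ 0, P_m(s) = 2 (sin(πs)/π) ∫_0^1 t^{s-1} (1-t)^{-s} (1-2t)^m dt. -/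
open MeasureTheory Real Complex

noncomputable def P (m : ℕ) (s : ℂ) : ℂ :=
  ∑ k ∈ Finset.range (m + 1),
    (m.choose k : ℂ) * (-1) ^ k * 2 ^ (k + 1) *
      (∏ i ∈ Finset.range k, (s + i)) / (k.factorial : ℂ)

lemma Gamma_add_nat (s : ℂ) (hs : 0 < s.re) (k : ℕ) :
    Complex.Gamma (s + k) = (∏ i ∈ Finset.range k, (s + i)) * Complex.Gamma s := by
  induction k with
  | zero => simp
  | succ n ih =>
    have hne : s + n ≠ 0 := by
      intro h
      have : (s + n).re = 0 := by rw [h]; simp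
      simp only [Complex.add_re, Complex.natCast_re] at this
      nlinarith [Nat.cast_nonneg (α := ℝ) n]
    have : s + (n + 1 : ℕ) = (s + n) + 1 := by push_cast; ring
    rw [this, Complex.Gamma_add_one _ hne, ih, Finset.prod_range_succ]
    ring

lemma beta_eval (s : ℂ) (hs0 : 0 < s.re) (hs1 : s.re < 1) (k : ℕ) :
    Complex.betaIntegral (s + k) (1 - s)
      = (∏ i ∈ Finset.range k, (s + i)) * Complex.Gamma s * Complex.Gamma (1 - s)
        / (k.factorial : ℂ) := by
  have hu : 0 < (s + k).re := by
    simp only [Complex.add_re, Complex.natCast_re]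
    positivity
  have hv : 0 < (1 - s).re := by
    simp only [Complex.sub_re, Complex.one_re]; linarith
  have h := Complex.Gamma_mul_Gamma_eq_betaIntegral hu hv
  have hsum : s + k + (1 - s) = (k : ℂ) + 1 := by ring
  rw [hsum, Complex.Gamma_nat_eq_factorial, Gamma_add_nat s hs0 k] at h
  have hfac : (k.factorial : ℂ) ≠ 0 := by exact_mod_cast k.factorial_ne_zero
  rw [eq_div_iff hfac]
  linear_combination -h

theorem stmt_3 (s : ℂ) (hs0 : 0 < s.re) (hs1 : s.re < 1) (m : ℕ) :
    P m s = 2 * (Complex.sin (π * s) / π) *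
      ∫ t in (0:ℝ)..1, (t : ℂ) ^ (s - 1) * ((1 : ℂ) - t) ^ (-s) *
        ((1 : ℂ) - 2 * t) ^ m := by
  have hv : 0 < (1 - s).re := by
    simp only [Complex.sub_re, Complex.one_re]; linarith
  have hint : (∫ t in (0:ℝ)..1, (t : ℂ) ^ (s - 1) * ((1 : ℂ) - t) ^ (-s) *
        ((1 : ℂ) - 2 * t) ^ m)
      = ∑ k ∈ Finset.range (m + 1),
          (m.choose k : ℂ) * (-2) ^ k * Complex.betaIntegral (s + k) (1 - s) := by
    have heq : ∀ t ∈ Set.Ioc (0:ℝ) 1,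
        (t : ℂ) ^ (s - 1) * ((1 : ℂ) - t) ^ (-s) * ((1 : ℂ) - 2 * t) ^ m
        = ∑ k ∈ Finset.range (m + 1),
            (m.choose k : ℂ) * (-2) ^ k *
              ((t : ℂ) ^ (s + k - 1) * ((1 : ℂ) - t) ^ ((1 - s) - 1)) := by
      intro t ht
      have ht0 : (t : ℂ) ≠ 0 := by
        exact_mod_cast ne_of_gt ht.1
      have hpow : ∀ k : ℕ, (t : ℂ) ^ (s + k - 1) = (t : ℂ) ^ (s - 1) * (t : ℂ) ^ k := by
        intro k
        rw [show s + k - 1 = (s - 1) + k by ring, Complex.cpow_add _ _ ht0,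
          Complex.cpow_natCast]
      have hbin : ((1 : ℂ) - 2 * t) ^ m
          = ∑ k ∈ Finset.range (m + 1), (m.choose k : ℂ) * (-2 * t) ^ k := by
        have := add_pow (-2 * (t:ℂ)) 1 m
        simp only [one_pow, mul_one] at this
        rw [show (1 : ℂ) - 2 * t = -2 * t + 1 by ring, this]
        refine Finset.sum_congr rfl fun k _ => by ring
      rw [hbin, Finset.mul_sum]
      refine Finset.sum_congr rfl fun k _ => ?_
      rw [hpow, show ((1:ℂ) - s) - 1 = -s by ring, mul_pow]
      ring
    rw [intervalIntegral.integral_congr_ae (g := fun t : ℝ =>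
        ∑ k ∈ Finset.range (m + 1),
          (m.choose k : ℂ) * (-2) ^ k *
            ((t : ℂ) ^ (s + k - 1) * ((1 : ℂ) - t) ^ ((1 - s) - 1)))]
    · rw [intervalIntegral.integral_finset_sum]
      · refine Finset.sum_congr rfl fun k _ => ?_
        rw [intervalIntegral.integral_const_mul]
        rfl
      · intro k _
        refine ((Complex.betaIntegral_convergent ?_ hv).const_mul _)
        simp only [Complex.add_re, Complex.natCast_re]
        positivity
    · filter_upwards with t ht
      rw [Set.uIoc_of_le (by norm_num : (0:ℝ) ≤ 1)] at ht
      exact heq t ht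
  rw [hint, Finset.mul_sum]
  unfold P
  refine Finset.sum_congr rfl fun k _ => ?_
  rw [beta_eval s hs0 hs1 k]
  have hrefl : Complex.Gamma s * Complex.Gamma (1 - s) = ↑π / Complex.sin (↑π * s) :=
    Complex.Gamma_mul_Gamma_one_sub s
  have hGs : Complex.Gamma s ≠ 0 := by
    refine Complex.Gamma_ne_zero fun n => ?_
    intro h
    have : s.re = -(n:ℝ) := by rw [h]; simp
    have h2 : (0:ℝ) ≤ (n:ℝ) := Nat.cast_nonneg n
    linarith
  have hG1s : Complex.Gamma (1 - s) ≠ 0 := by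
    refine Complex.Gamma_ne_zero fun n => ?_
    intro h
    have : (1 - s).re = -(n:ℝ) := by rw [h]; simp
    simp only [Complex.sub_re, Complex.one_re] at this
    have h2 : (0:ℝ) ≤ (n:ℝ) := Nat.cast_nonneg n
    linarith
  have hpi : (π : ℂ) ≠ 0 := by exact_mod_cast Real.pi_ne_zero
  have hsin : Complex.sin (π * s) ≠ 0 := by
    intro h
    rw [Complex.sin_eq_zero_iff] at h
    obtain ⟨n, hn⟩ := h
    have hsn : s = (n : ℂ) := mul_left_cancel₀ hpi (by rw [hn]; ring)
    have hre : s.re = (n : ℝ) := by rw [hsn]; simp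
    rw [hre] at hs0 hs1
    have h0 : (0:ℤ) < n := by exact_mod_cast hs0
    have h1 : n < (1:ℤ) := by exact_mod_cast hs1
    omega
  have hrefl2 : Complex.Gamma s * Complex.Gamma (1 - s) * Complex.sin (π * s)
      = (π : ℂ) := by
    rw [hrefl]; field_simp
  have hfack : (k.factorial : ℂ) ≠ 0 := by exact_mod_cast k.factorial_ne_zero
  have hneg : ((-1 : ℂ)) ^ k * 2 ^ k = (-2) ^ k := by
    rw [← mul_pow]; norm_num
  field_simp
  rw [mul_comm s (π : ℂ)]
  linear_combination (-((m.choose k : ℂ) * (∏ i ∈ Finset.range k, (s + i)) * 2 *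
      (-2) ^ k)) * hrefl2 +
    ((m.choose k : ℂ) * (∏ i ∈ Finset.range k, (s + i)) * 2 * (π : ℂ)) * hneg
end

section
/- Define P_m(s) = ∑_{k=0}^m C(m,k) (-1)^k 2^{k+1} (s)_k / k!. Then for every complex s and every m ≥ 0, P_m(1-s) = (-1)^m P_m(s). -/
noncomputable def T (n k : ℕ) (s : ℂ) : ℂ :=
  (n.choose k : ℂ) * (-1) ^ k * 2 ^ (k + 1) *
      (∏ i ∈ Finset.range k, (s + i)) / (k.factorial : ℂ)

noncomputable def H (m : ℕ) (s : ℂ) (k : ℕ) : ℂ :=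
  (k:ℂ) * ((m+1).choose (k-1) : ℂ) * (-1) ^ k * 2 ^ (k + 1) *
      (∏ i ∈ Finset.range k, (s + i)) / (k.factorial : ℂ)

lemma key (m k : ℕ) :
    (m+2) * (m+2).choose k
      = (1+2*k) * (m+1).choose k + k * (m+1).choose (k-1) + (m+1) * m.choose k := by
  match k with
  | 0 => simp; ring
  | j+1 =>
    rcases le_or_gt j m with hj | hj
    · have h1 : (m+2).choose (j+1) = (m+1).choose j + (m+1).choose (j+1) :=
        Nat.choose_succ_succ _ _
      have h2 := Nat.choose_succ_right_eq (m+1) j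
      have h3 := Nat.choose_mul_succ_eq m (j+1)
      rw [show m+1-j = (m-j)+1 from by omega] at h2
      rw [show m+1-(j+1) = m-j from by omega] at h3
      obtain ⟨d, rfl⟩ : ∃ d, m = j + d := ⟨m - j, by omega⟩
      rw [show j+d-j = d from by omega] at h2 h3
      simp only [Nat.add_sub_cancel]
      zify at *
      linear_combination (j+d+2)*h1 - h2 - h3
    · rcases eq_or_lt_of_le (Nat.succ_le_of_lt hj) with hj1 | hj2
      · subst hj1
        simp only [Nat.succ_eq_add_one, Nat.add_sub_cancel]
        rw [Nat.choose_self, Nat.choose_self,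
          Nat.choose_eq_zero_of_lt (show m+1 < m+1+1 by omega),
          Nat.choose_eq_zero_of_lt (show m < m+1+1 by omega)]
        ring
      · rw [Nat.choose_eq_zero_of_lt (by omega), Nat.choose_eq_zero_of_lt (by omega),
          Nat.choose_eq_zero_of_lt (by omega), Nat.choose_eq_zero_of_lt (by omega)]
        simp

lemma step (m k : ℕ) (s : ℂ) :
    (1-2*s) * T (m+1) k s + ((m:ℂ)+1) * T m k s - ((m:ℂ)+2) * T (m+2) k s
      = H m s (k+1) - H m s k := by
  have hc : ((m:ℂ) + 2) * ((m+2).choose k : ℂ)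
      = (1+2*(k:ℂ)) * ((m+1).choose k : ℂ) + (k:ℂ) * ((m+1).choose (k-1) : ℂ)
        + ((m:ℂ)+1) * (m.choose k : ℂ) := by
    exact_mod_cast congrArg (Nat.cast : ℕ → ℂ) (key m k)
  have h1 : ((k.factorial : ℂ)) ≠ 0 := Nat.cast_ne_zero.2 k.factorial_ne_zero
  have hH : H m s (k+1) = ((m+1).choose k : ℂ) * (-1)^(k+1) * 2^(k+2) *
      ((∏ i ∈ Finset.range k, (s+i)) * (s+k)) / (k.factorial : ℂ) := by
    have h2 : ((k:ℂ)+1) ≠ 0 := by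
      have := Nat.cast_add_one_ne_zero (R := ℂ) k
      exact_mod_cast this
    unfold H
    rw [Nat.add_sub_cancel, Finset.prod_range_succ, Nat.factorial_succ]
    push_cast
    field_simp
  rw [hH]
  unfold T H
  linear_combination
    (-((-1:ℂ)^k * 2^(k+1) * (∏ i ∈ Finset.range k, (s+i)) / (k.factorial:ℂ))) * hc

lemma ext_sum (n m : ℕ) (s : ℂ) (hn : n + 1 ≤ m) :
    P n s = ∑ k ∈ Finset.range m, T n k s := by
  rw [show P n s = ∑ k ∈ Finset.range (n+1), T n k s from rfl]
  apply Finset.sum_subset (Finset.range_subset_range.2 hn)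
  intro x hx hnx
  simp only [Finset.mem_range, not_lt] at hnx
  unfold T
  rw [Nat.choose_eq_zero_of_lt (by omega)]
  simp

lemma recP (m : ℕ) (s : ℂ) :
    ((m:ℂ)+2) * P (m+2) s = (1-2*s) * P (m+1) s + ((m:ℂ)+1) * P m s := by
  have h : (1-2*s) * P (m+1) s + ((m:ℂ)+1) * P m s - ((m:ℂ)+2) * P (m+2) s = 0 := by
    rw [ext_sum m (m+3) s (by omega), ext_sum (m+1) (m+3) s (by omega),
      ext_sum (m+2) (m+3) s (by omega)]
    rw [Finset.mul_sum, Finset.mul_sum, Finset.mul_sum, ← Finset.sum_add_distrib,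
      ← Finset.sum_sub_distrib]
    rw [Finset.sum_congr rfl (fun k _ => step m k s), Finset.sum_range_sub]
    unfold H
    rw [Nat.choose_eq_zero_of_lt (by omega)]
    simp
  linear_combination -h

theorem stmt_7 (s : ℂ) (m : ℕ) : P m (1 - s) = (-1) ^ m * P m s := by
  induction m using Nat.twoStepInduction with
  | zero => simp [P]
  | one => simp [P, Finset.sum_range_succ]; ring
  | more n ih1 ih2 =>
    have h2 : ((n:ℂ)+2) ≠ 0 := by
      have : ((n+2 : ℕ) : ℂ) ≠ 0 := Nat.cast_ne_zero.2 (by omega)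
      push_cast at this
      exact this
    apply mul_left_cancel₀ h2
    calc ((n:ℂ)+2) * P (n+2) (1-s)
        = (1-2*(1-s)) * ((-1)^(n+1) * P (n+1) s) + ((n:ℂ)+1) * ((-1)^n * P n s) := by
          rw [recP n (1-s), ih2, ih1]
      _ = (-1)^(n+2) * ((1-2*s) * P (n+1) s + ((n:ℂ)+1) * P n s) := by ring
      _ = (-1)^(n+2) * (((n:ℂ)+2) * P (n+2) s) := by rw [← recP n s]
      _ = ((n:ℂ)+2) * ((-1)^(n+2) * P (n+2) s) := by ring
end

section
/- For every complex s with Re(s) > 0 and every complex z with |z| < 1, the function z ↦ (2/(1-z))((1-z)/(1+z))^s is analytic on the open unit disc and its Taylor coefficients at 0 are P_m(s) = ∑_{k=0}^m C(m,k) (-1)^k 2^{k+1} (s)_k / k!; i.e., (2/(1-z))((1-z)/(1+z))^s = ∑_{m≥0} P_m(s) z^m for |z|<1. -/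
open Complex

noncomputable def G (s z : ℂ) : ℂ := 2 / (1 - z) * (((1 - z) / (1 + z)) ^ s)

noncomputable def cc (s : ℂ) (k : ℕ) : ℂ :=
  (∏ i ∈ Finset.range k, (s + i)) / (k.factorial : ℂ)

lemma norm_cc_le (s : ℂ) (k : ℕ) : ‖cc s k‖ ≤ (‖s‖ + 1) ^ k := by
  have hfac : (0:ℝ) < (k.factorial : ℝ) := by positivity
  have h1 : ‖∏ i ∈ Finset.range k, (s + (i:ℂ))‖ ≤ (‖s‖ + 1) ^ k * (k.factorial : ℝ) := by
    rw [norm_prod]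
    calc ∏ i ∈ Finset.range k, ‖s + (i:ℂ)‖
        ≤ ∏ i ∈ Finset.range k, ((‖s‖ + 1) * ((i:ℝ) + 1)) := by
          apply Finset.prod_le_prod
          · intro i _; positivity
          · intro i _
            calc ‖s + (i:ℂ)‖ ≤ ‖s‖ + ‖(i:ℂ)‖ := norm_add_le _ _
              _ = ‖s‖ + (i:ℝ) := by rw [Complex.norm_natCast]
              _ ≤ (‖s‖ + 1) * ((i:ℝ) + 1) := by nlinarith [norm_nonneg s, Nat.cast_nonneg (α := ℝ) i]
      _ = (‖s‖ + 1) ^ k * ∏ i ∈ Finset.range k, ((i:ℝ) + 1) := by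
          rw [Finset.prod_mul_distrib, Finset.prod_const, Finset.card_range]
      _ = (‖s‖ + 1) ^ k * (k.factorial : ℝ) := by
          congr 1
          rw [← Finset.prod_range_add_one_eq_factorial]
          push_cast
          rfl
  rw [cc, norm_div, Complex.norm_natCast]
  rw [div_le_iff₀ hfac]
  exact h1

lemma cc_rec (s : ℂ) (k : ℕ) : ((k:ℂ) + 1) * cc s (k+1) = (s + k) * cc s k := by
  have hk : ((k.factorial : ℂ)) ≠ 0 := by
    exact_mod_cast Nat.cast_ne_zero.mpr (Nat.factorial_ne_zero k)
  have hk1 : ((k:ℂ) + 1) ≠ 0 := by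
    have := Nat.cast_add_one_ne_zero (R := ℂ) k
    exact_mod_cast this
  rw [cc, cc, Finset.prod_range_succ, Nat.factorial_succ]
  push_cast
  field_simp

lemma one_sub_ne {z : ℂ} (hz : ‖z‖ < 1) : (1 : ℂ) - z ≠ 0 := by
  intro h
  have : (1:ℂ) = z := by linear_combination h
  rw [← this] at hz; simp at hz

lemma one_add_ne {z : ℂ} (hz : ‖z‖ < 1) : (1 : ℂ) + z ≠ 0 := by
  intro h
  have : z = -1 := by linear_combination h
  rw [this] at hz; simp at hz

lemma re_pos {z : ℂ} (hz : ‖z‖ < 1) : 0 < ((1 - z) / (1 + z)).re := by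
  have h1 : (1:ℂ) + z ≠ 0 := one_add_ne hz
  have hn : 0 < Complex.normSq (1 + z) := Complex.normSq_pos.mpr h1
  have hz2 : z.re ^ 2 + z.im ^ 2 < 1 := by
    have h := Complex.sq_norm z
    have : ‖z‖ ^ 2 < 1 := by
      have hab : ‖z‖ < 1 := hz
      nlinarith [norm_nonneg z]
    rw [h] at this
    rw [Complex.normSq_apply] at this
    nlinarith
  rw [Complex.div_re]
  rw [← add_div]
  apply div_pos _ hn
  simp only [Complex.sub_re, Complex.sub_im, Complex.add_re, Complex.add_im,
    Complex.one_re, Complex.one_im]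
  nlinarith

lemma binom (s : ℂ) {w : ℂ} (hw : ‖w‖ < (2 * (‖s‖ + 1))⁻¹) :
    HasSum (fun k => cc s k * w ^ k) ((1 - w) ^ (-s)) := by
  set ρ : ℝ := (2 * (‖s‖ + 1))⁻¹ with hρdef
  have hs1 : (0:ℝ) < ‖s‖ + 1 := by positivity
  have hρ : 0 < ρ := by positivity
  have hkey : (‖s‖ + 1) * ρ = 2⁻¹ := by
    rw [hρdef]; field_simp
  have hρhalf : ρ ≤ 2⁻¹ := by
    nlinarith [norm_nonneg s]
  set t : Set ℂ := Metric.ball (0:ℂ) ρ with htdef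
  have hmem : ∀ y ∈ t, ‖y‖ < ρ := by
    intro y hy
    rwa [htdef, Metric.mem_ball, dist_zero_right] at hy
  have hlt1 : ∀ y ∈ t, ‖y‖ < 1 := fun y hy => lt_of_lt_of_le (hmem y hy) (by linarith)
  have hne : ∀ y ∈ t, (1:ℂ) - y ≠ 0 := fun y hy => one_sub_ne (hlt1 y hy)
  have hrepos : ∀ y ∈ t, 0 < (1 - y).re := by
    intro y hy
    have := Complex.abs_re_le_norm y
    have h1 : |y.re| ≤ ‖y‖ := this
    have : y.re < 1 := lt_of_le_of_lt (le_trans (le_abs_self _) h1) (hlt1 y hy)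
    simp [Complex.sub_re]
    linarith
  -- the summable bound for derivatives
  set u : ℕ → ℝ := fun k => 2 * (‖s‖ + 1) * ((k:ℝ) * (2⁻¹:ℝ) ^ k) with hudef
  have hu : Summable u := by
    apply Summable.mul_left
    have h := summable_pow_mul_geometric_of_norm_lt_one (R := ℝ) 1 (r := (2⁻¹:ℝ)) (by norm_num)
    simpa [pow_one] using h
  have hbound : ∀ (k : ℕ), ∀ y ∈ t, ‖cc s k * ((k:ℂ) * y ^ (k-1))‖ ≤ u k := by
    intro k y hy
    rcases k with _ | k
    · simp [hudef]
    · have hyn : ‖y‖ ≤ ρ := le_of_lt (hmem y hy)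
      have hnat : ‖((k:ℂ)+1)‖ = (k:ℝ)+1 := by
        rw [show ((k:ℂ)+1) = ((k+1:ℕ):ℂ) by push_cast; ring, Complex.norm_natCast]
        push_cast; ring
      have h1 : ‖cc s (k+1) * (((k:ℂ)+1) * y ^ k)‖
          = ‖cc s (k+1)‖ * (((k:ℝ)+1) * ‖y‖ ^ k) := by
        rw [norm_mul, norm_mul, norm_pow, hnat]
      have h2 : ‖cc s (k+1)‖ * (((k:ℝ)+1) * ‖y‖ ^ k)
          ≤ (‖s‖+1) ^ (k+1) * (((k:ℝ)+1) * ρ ^ k) := by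
        apply mul_le_mul (norm_cc_le s (k+1))
        · apply mul_le_mul_of_nonneg_left _ (by positivity)
          exact pow_le_pow_left₀ (norm_nonneg y) hyn k
        · positivity
        · positivity
      have h3 : (‖s‖+1) ^ (k+1) * (((k:ℝ)+1) * ρ ^ k) = u (k+1) := by
        have e1 : ((‖s‖+1) * ρ) ^ k = (2⁻¹:ℝ) ^ k := by rw [hkey]
        rw [show (‖s‖+1) ^ (k+1) * (((k:ℝ)+1) * ρ ^ k)
            = (‖s‖+1) * ((‖s‖+1) * ρ) ^ k * ((k:ℝ)+1) by rw [mul_pow]; ring, e1, hudef]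
        push_cast
        ring
      calc ‖cc s (k+1) * ((((k:ℕ)+1 : ℕ):ℂ) * y ^ (k+1-1))‖
          = ‖cc s (k+1) * (((k:ℂ)+1) * y ^ k)‖ := by push_cast; ring_nf
        _ ≤ (‖s‖+1) ^ (k+1) * (((k:ℝ)+1) * ρ ^ k) := le_trans (le_of_eq h1) h2
        _ = u (k+1) := h3
  have hderiv : ∀ (k : ℕ), ∀ y ∈ t,
      HasDerivAt (fun x : ℂ => cc s k * x ^ k) (cc s k * ((k:ℂ) * y ^ (k-1))) y :=
    fun k y _ => (hasDerivAt_pow k y).const_mul (cc s k)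
  have hsum0 : Summable (fun k => cc s k * (0:ℂ) ^ k) := by
    apply summable_of_ne_finset_zero (s := {0})
    intro b hb
    simp only [Finset.mem_singleton] at hb
    simp [zero_pow hb]
  have hopen : IsOpen t := Metric.isOpen_ball
  have hpre : IsPreconnected t := (convex_ball (0:ℂ) ρ).isPreconnected
  have hcenter : (0:ℂ) ∈ t := Metric.mem_ball_self hρ
  -- the sum function and its derivative
  set f : ℂ → ℂ := fun x => ∑' k, cc s k * x ^ k with hfdef
  set D : ℂ → ℂ := fun x => ∑' k, cc s k * ((k:ℂ) * x ^ (k-1)) with hDdef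
  have hdf : ∀ w ∈ t, HasDerivAt f (D w) w := by
    intro w hwt
    exact hasDerivAt_tsum_of_isPreconnected hu hopen hpre hderiv hbound hcenter hsum0 hwt
  have hsummable : ∀ y ∈ t, Summable (fun k => cc s k * y ^ k) := by
    intro y hy
    apply Summable.of_norm_bounded (g := fun k => (2⁻¹:ℝ) ^ k)
      (summable_geometric_of_lt_one (by norm_num) (by norm_num))
    intro k
    have h1 : ‖cc s k * y ^ k‖ ≤ (‖s‖+1) ^ k * ‖y‖ ^ k := by
      rw [norm_mul, norm_pow]
      apply mul_le_mul_of_nonneg_right (norm_cc_le s k) (by positivity)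
    calc ‖cc s k * y ^ k‖ ≤ (‖s‖+1) ^ k * ‖y‖ ^ k := h1
      _ = ((‖s‖+1) * ‖y‖) ^ k := by rw [mul_pow]
      _ ≤ (2⁻¹:ℝ) ^ k := by
          apply pow_le_pow_left₀ (by positivity)
          rw [← hkey]
          exact mul_le_mul_of_nonneg_left (le_of_lt (hmem y hy)) (by positivity)
  have hDsummable : ∀ y ∈ t, Summable (fun k => cc s k * ((k:ℂ) * y ^ (k-1))) := by
    intro y hy
    exact Summable.of_norm_bounded hu (fun k => hbound k y hy)
  -- the key ODE identity
  have key : ∀ w ∈ t, (1 - w) * D w = s * f w := by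
    intro w hwt
    have hfw : HasSum (fun k => cc s k * w ^ k) (f w) := (hsummable w hwt).hasSum
    have hDw : HasSum (fun k => cc s k * ((k:ℂ) * w ^ (k-1))) (D w) := (hDsummable w hwt).hasSum
    have hshift : HasSum (fun n => cc s (n+1) * (((n:ℂ)+1) * w ^ n)) (D w) := by
      have h := (hasSum_nat_add_iff' (f := fun k => cc s k * ((k:ℂ) * w ^ (k-1))) 1).mpr hDw
      simp only [Finset.range_one, Finset.sum_singleton, Nat.cast_zero, zero_mul, mul_zero,
        sub_zero] at h
      convert h using 2 with n
      all_goals push_cast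
      all_goals norm_num
      all_goals rfl
    have hterm : ∀ n : ℕ, cc s (n+1) * (((n:ℂ)+1) * w ^ n)
        = s * (cc s n * w ^ n) + (n:ℂ) * (cc s n * w ^ n) := by
      intro n
      have h := cc_rec s n
      calc cc s (n+1) * (((n:ℂ)+1) * w ^ n) = (((n:ℂ)+1) * cc s (n+1)) * w ^ n := by ring
        _ = ((s + (n:ℂ)) * cc s n) * w ^ n := by rw [h]
        _ = s * (cc s n * w ^ n) + (n:ℂ) * (cc s n * w ^ n) := by ring
    have hshift' : HasSum (fun (n : ℕ) => s * (cc s n * w ^ n) + (n:ℂ) * (cc s n * w ^ n)) (D w) := by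
      have : (fun n => cc s (n+1) * (((n:ℂ)+1) * w ^ n))
          = fun (n : ℕ) => s * (cc s n * w ^ n) + (n:ℂ) * (cc s n * w ^ n) := funext hterm
      rwa [this] at hshift
    have h1 : HasSum (fun (n : ℕ) => s * (cc s n * w ^ n)) (s * f w) := hfw.mul_left s
    have h2 : HasSum (fun (n : ℕ) => (n:ℂ) * (cc s n * w ^ n)) (D w - s * f w) := by
      have h := hshift'.sub h1
      simpa using h
    have h3 : HasSum (fun (n : ℕ) => (n:ℂ) * (cc s n * w ^ n)) (w * D w) := by
      have h := hDw.mul_left w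
      have heq : (fun (n : ℕ) => w * (cc s n * ((n:ℂ) * w ^ (n-1))))
          = fun (n : ℕ) => (n:ℂ) * (cc s n * w ^ n) := by
        funext n
        rcases n with _ | n
        · simp
        · simp only [Nat.add_sub_cancel]
          push_cast
          rw [pow_succ]
          ring
      rwa [heq] at h
    have := h3.unique h2
    linear_combination -this
  -- F is constant
  set F : ℂ → ℂ := fun x => f x * (1 - x) ^ s with hFdef
  have hF0 : ∀ x ∈ t, HasDerivAt F 0 x := by
    intro x hx
    have hder1 : HasDerivAt (fun y : ℂ => 1 - y) (-1 : ℂ) x := by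
      simpa using (hasDerivAt_id x).const_sub 1
    have hd2 : HasDerivAt (fun y : ℂ => (1 - y) ^ s) (s * (1 - x) ^ (s - 1) * (-1)) x :=
      hder1.cpow_const (Or.inl (hrepos x hx))
    have h := (hdf x hx).mul hd2
    have hz : D x * (1 - x) ^ s + f x * (s * (1 - x) ^ (s-1) * (-1)) = 0 := by
      have hcs : (1 - x) ^ (s - 1) = (1 - x) ^ s / (1 - x) := by
        rw [Complex.cpow_sub _ _ (hne x hx), Complex.cpow_one]
      rw [hcs]
      have hxc := hne x hx
      field_simp
      linear_combination (1 - x) ^ s * key x hx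
    rw [hz] at h
    exact h
  have hconst : F w = F 0 := by
    apply (convex_ball (0:ℂ) ρ).is_const_of_fderivWithin_eq_zero
      (fun y hy => ((hF0 y hy).differentiableAt).differentiableWithinAt)
    · intro y hy
      rw [fderivWithin_of_isOpen hopen hy]
      have hfd := (hF0 y hy).hasFDerivAt.fderiv
      rw [hfd]
      ext v
      simp
    · rwa [Metric.mem_ball, dist_zero_right]
    · exact hcenter
  have hwt : w ∈ t := by rwa [Metric.mem_ball, dist_zero_right]
  have hf0 : f 0 = 1 := by
    have hrfl : f 0 = ∑' k, cc s k * (0:ℂ) ^ k := rfl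
    rw [hrfl, tsum_eq_single 0 (by intro b hb; simp [zero_pow hb])]
    simp [cc]
  have hF0val : F 0 = 1 := by
    rw [hFdef]
    simp [hf0]
  have hmul : f w * (1 - w) ^ s = 1 := by
    have := hconst
    rw [hF0val] at this
    exact this
  have hcne : (1 - w) ^ s ≠ 0 := by
    intro h
    rcases (Complex.cpow_eq_zero_iff _ _).mp h with ⟨h1, _⟩
    exact hne w hwt h1
  have hfw : f w = (1 - w) ^ (-s) := by
    rw [Complex.cpow_neg]
    exact eq_inv_of_mul_eq_one_left (by linear_combination hmul)
  have := (hsummable w hwt).hasSum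
  rwa [show ∑' k, cc s k * w ^ k = (1 - w) ^ (-s) from hfw] at this

noncomputable def aa (s : ℂ) (k : ℕ) : ℂ := 2 * (-2) ^ k * cc s k

lemma neg_two_pow (k : ℕ) : ((-2 : ℂ)) ^ k = (-1) ^ k * 2 ^ k := by
  rw [show ((-2):ℂ) = -1 * 2 by norm_num, mul_pow]

lemma norm_aa_le (s : ℂ) (k : ℕ) : ‖aa s k‖ ≤ 2 * (2 * (‖s‖ + 1)) ^ k := by
  rw [aa, norm_mul, norm_mul, norm_pow]
  have h2 : ‖(-2 : ℂ)‖ = 2 := by simp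
  have h2' : ‖(2 : ℂ)‖ = 2 := by simp
  rw [h2, h2']
  calc 2 * 2 ^ k * ‖cc s k‖ ≤ 2 * 2 ^ k * (‖s‖ + 1) ^ k := by
        apply mul_le_mul_of_nonneg_left (norm_cc_le s k) (by positivity)
    _ = 2 * (2 * (‖s‖ + 1)) ^ k := by rw [mul_pow]; ring

lemma P_eq (m : ℕ) (s : ℂ) :
    P m s = ∑ k ∈ Finset.range (m + 1), (m.choose k : ℂ) * aa s k := by
  rw [P]
  apply Finset.sum_congr rfl
  intro k _
  rw [aa, cc, neg_two_pow, pow_succ]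
  field_simp

lemma hsmall (s : ℂ) {z : ℂ} (hz : ‖z‖ < (8 * (‖s‖ + 1))⁻¹) :
    HasSum (fun m => P m s * z ^ m) (G s z) := by
  have hs1 : (0:ℝ) < ‖s‖ + 1 := by positivity
  have hδ : (8 * (‖s‖ + 1))⁻¹ ≤ 8⁻¹ := by
    apply inv_anti₀ (by norm_num)
    nlinarith [norm_nonneg s]
  have hz8 : ‖z‖ < 8⁻¹ := lt_of_lt_of_le hz hδ
  have hz1 : ‖z‖ < 1 := by linarith
  have hz2 : ‖z‖ < 2⁻¹ := by linarith
  have h1mz : (1:ℂ) - z ≠ 0 := one_sub_ne hz1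
  have h1pz : (1:ℂ) + z ≠ 0 := one_add_ne hz1
  -- w and its norm bound
  set w : ℂ := (-2 * z) / (1 - z) with hwdef
  have hnorm1mz : (2⁻¹:ℝ) ≤ ‖(1:ℂ) - z‖ := by
    have h := norm_sub_norm_le (1:ℂ) z
    simp only [norm_one] at h
    linarith
  have hww : ‖w‖ < (2 * (‖s‖ + 1))⁻¹ := by
    rw [hwdef, norm_div, norm_mul]
    have h2 : ‖(-2 : ℂ)‖ = 2 := by simp
    rw [h2]
    have hpos : (0:ℝ) < ‖(1:ℂ) - z‖ := lt_of_lt_of_le (by norm_num) hnorm1mz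
    calc 2 * ‖z‖ / ‖(1:ℂ) - z‖ ≤ 2 * ‖z‖ / 2⁻¹ := by
          apply div_le_div_of_nonneg_left (by positivity) (by norm_num) hnorm1mz
      _ = 4 * ‖z‖ := by ring
      _ < 4 * (8 * (‖s‖ + 1))⁻¹ := by linarith
      _ = (2 * (‖s‖ + 1))⁻¹ := by field_simp; ring
  -- the double-indexed family
  set F : ℕ × ℕ → ℂ := fun p =>
    if p.2 ≤ p.1 then (p.1.choose p.2 : ℂ) * aa s p.2 * z ^ p.1 else 0 with hFdef
  -- norm summability
  have hnorm_row : ∀ m, Summable (fun k => ‖F (m, k)‖) := by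
    intro m
    apply summable_of_ne_finset_zero (s := Finset.range (m+1))
    intro k hk
    simp only [Finset.mem_range] at hk
    have : ¬ (k ≤ m) := by omega
    simp [hFdef, this]
  have hratio : (0:ℝ) ≤ 4 * (‖s‖ + 1) * ‖z‖ := by positivity
  have hratio1 : 4 * (‖s‖ + 1) * ‖z‖ < 2⁻¹ := by
    have : 4 * (‖s‖ + 1) * ‖z‖ < 4 * (‖s‖ + 1) * (8 * (‖s‖ + 1))⁻¹ := by
      apply mul_lt_mul_of_pos_left hz (by positivity)
    have heq : 4 * (‖s‖ + 1) * (8 * (‖s‖ + 1))⁻¹ = 2⁻¹ := by field_simp; ring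
    linarith [heq ▸ this]
  have hrowsum_le : ∀ m, ∑' k, ‖F (m, k)‖ ≤ 2 * (4 * (‖s‖ + 1) * ‖z‖) ^ m := by
    intro m
    rw [tsum_eq_sum (s := Finset.range (m+1))
      (by intro k hk; simp only [Finset.mem_range] at hk
          have : ¬ (k ≤ m) := by omega
          simp [hFdef, this])]
    have hterm : ∀ k ∈ Finset.range (m+1),
        ‖F (m, k)‖ ≤ (m.choose k : ℝ) * (2 * (2 * (‖s‖ + 1)) ^ k) * ‖z‖ ^ m := by
      intro k hk
      simp only [Finset.mem_range] at hk
      have hkm : k ≤ m := by omega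
      simp only [hFdef, if_pos hkm]
      rw [norm_mul, norm_mul, norm_pow, Complex.norm_natCast]
      apply mul_le_mul_of_nonneg_right _ (by positivity)
      exact mul_le_mul_of_nonneg_left (norm_aa_le s k) (by positivity)
    calc ∑ k ∈ Finset.range (m+1), ‖F (m, k)‖
        ≤ ∑ k ∈ Finset.range (m+1), (m.choose k : ℝ) * (2 * (2 * (‖s‖ + 1)) ^ k) * ‖z‖ ^ m :=
          Finset.sum_le_sum hterm
      _ = 2 * ((∑ k ∈ Finset.range (m+1), (2 * (‖s‖ + 1)) ^ k * (m.choose k : ℝ)) * ‖z‖ ^ m) := by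
          rw [Finset.sum_mul, Finset.mul_sum]
          apply Finset.sum_congr rfl
          intro k _
          ring
      _ = 2 * ((2 * (‖s‖ + 1) + 1) ^ m * ‖z‖ ^ m) := by
          congr 2
          rw [add_pow]
          apply Finset.sum_congr rfl
          intro k _
          simp
      _ ≤ 2 * (4 * (‖s‖ + 1) * ‖z‖) ^ m := by
          rw [← mul_pow]
          apply mul_le_mul_of_nonneg_left _ (by norm_num)
          apply pow_le_pow_left₀ (by positivity)
          nlinarith [norm_nonneg s, norm_nonneg z]
  have hsumnorm : Summable (fun p : ℕ × ℕ => ‖F p‖) := by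
    rw [summable_prod_of_nonneg (fun p => norm_nonneg _)]
    refine ⟨hnorm_row, ?_⟩
    apply Summable.of_nonneg_of_le (fun m => tsum_nonneg (fun k => norm_nonneg _)) hrowsum_le
    apply Summable.mul_left
    apply summable_geometric_of_lt_one hratio (by linarith)
  have hFsummable : Summable F := Summable.of_norm hsumnorm
  have hS : HasSum F (∑' p, F p) := hFsummable.hasSum
  -- row fibers
  have hrow : ∀ m, HasSum (fun k => F (m, k)) (P m s * z ^ m) := by
    intro m
    have h : HasSum (fun k => F (m, k)) (∑ k ∈ Finset.range (m+1), F (m, k)) := hasSum_sum_of_ne_finset_zero (f := fun k => F (m, k)) (s := Finset.range (m+1))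
      (by intro k hk; simp only [Finset.mem_range] at hk
          have : ¬ (k ≤ m) := by omega
          simp [hFdef, this])
    have heq : ∑ k ∈ Finset.range (m+1), F (m, k) = P m s * z ^ m := by
      rw [P_eq, Finset.sum_mul]
      apply Finset.sum_congr rfl
      intro k hk
      simp only [Finset.mem_range] at hk
      have hkm : k ≤ m := by omega
      simp [hFdef, if_pos hkm]
    rwa [heq] at h
  -- column fibers
  have hcol : ∀ k, HasSum (fun m => F (m, k)) (aa s k * z ^ k * (1 / (1 - z) ^ (k+1))) := by
    intro k
    have base := hasSum_choose_mul_geometric_of_norm_lt_one (𝕜 := ℂ) k (r := z) hz1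
    have h2 := base.mul_left (aa s k * z ^ k)
    have heq : (fun (n : ℕ) => aa s k * z ^ k * (((n+k).choose k : ℂ) * z ^ n))
        = fun (n : ℕ) => F (n + k, k) := by
      funext n
      have : k ≤ n + k := Nat.le_add_left k n
      simp only [hFdef, if_pos this]
      rw [pow_add]
      ring
    rw [heq] at h2
    have h3 := (hasSum_nat_add_iff (f := fun m => F (m, k)) k).mp h2
    have hzero : ∑ i ∈ Finset.range k, F (i, k) = 0 := by
      apply Finset.sum_eq_zero
      intro i hi
      simp only [Finset.mem_range] at hi
      have : ¬ (k ≤ i) := by omega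
      simp [hFdef, this]
    rwa [hzero, add_zero] at h3
  -- combine
  have hPz : HasSum (fun m => P m s * z ^ m) (∑' p, F p) := hS.prod_fiberwise hrow
  have hswap : HasSum (fun p : ℕ × ℕ => F (p.2, p.1)) (∑' p, F p) := by
    have h := ((Equiv.prodComm ℕ ℕ).hasSum_iff).mpr hS
    exact h
  have hcolS : HasSum (fun k => aa s k * z ^ k * (1 / (1 - z) ^ (k+1))) (∑' p, F p) :=
    hswap.prod_fiberwise hcol
  -- binomial series evaluation
  have hb := (binom s hww).mul_left (2 / (1 - z))
  have hterm2 : (fun (k : ℕ) => 2 / (1 - z) * (cc s k * w ^ k))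
      = fun (k : ℕ) => aa s k * z ^ k * (1 / (1 - z) ^ (k+1)) := by
    funext k
    rw [hwdef, aa, div_pow, mul_pow, neg_two_pow]
    rw [pow_succ]
    field_simp
  rw [hterm2] at hb
  have hw1 : 1 - w = (1 + z) / (1 - z) := by
    rw [hwdef]
    field_simp
    ring
  have hre2 : 0 < ((1 + z) / (1 - z)).re := by
    have h := re_pos (z := -z) (by rwa [norm_neg])
    simpa [sub_neg_eq_add, ← sub_eq_add_neg] using h
  have harg : ((1 + z) / (1 - z)).arg ≠ Real.pi := by
    intro h
    have := Complex.arg_eq_pi_iff.mp h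
    linarith [this.1]
  have hcpow : ((1 + z) / (1 - z)) ^ (-s) = ((1 - z) / (1 + z)) ^ s := by
    rw [Complex.cpow_neg]
    rw [show (1 - z) / (1 + z) = ((1 + z) / (1 - z))⁻¹ by rw [inv_div]]
    rw [Complex.inv_cpow _ _ harg]
  have hbval : 2 / (1 - z) * (1 - w) ^ (-s) = G s z := by
    rw [hw1, hcpow, G]
  rw [hbval] at hb
  have hSG : (∑' p, F p) = G s z := hcolS.unique hb
  rwa [hSG] at hPz

theorem stmt_9 (s : ℂ) (hs : 0 < s.re) :
    AnalyticOn ℂ (G s) (Metric.ball (0 : ℂ) 1) ∧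
      ∀ z : ℂ, ‖z‖ < 1 → G s z = ∑' m : ℕ, P m s * z ^ m := by
  have hdiff : DifferentiableOn ℂ (G s) (Metric.ball (0:ℂ) 1) := by
    intro x hx
    have hx1 : ‖x‖ < 1 := by rwa [Metric.mem_ball, dist_zero_right] at hx
    have h1 : DifferentiableAt ℂ (fun z : ℂ => 2 / (1 - z)) x := by
      apply DifferentiableAt.div (differentiableAt_const 2)
      · exact (differentiableAt_const 1).sub differentiableAt_id
      · exact one_sub_ne hx1
    have hbase : DifferentiableAt ℂ (fun z : ℂ => (1 - z) / (1 + z)) x := by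
      apply DifferentiableAt.div
      · exact (differentiableAt_const 1).sub differentiableAt_id
      · exact (differentiableAt_const 1).add differentiableAt_id
      · exact one_add_ne hx1
    have h2 : DifferentiableAt ℂ (fun z : ℂ => ((1 - z) / (1 + z)) ^ s) x := by
      apply DifferentiableAt.cpow hbase (differentiableAt_const s)
      exact Or.inl (re_pos hx1)
    exact (h1.mul h2).differentiableWithinAt
  constructor
  · exact hdiff.analyticOn Metric.isOpen_ball
  · intro z hz
    have habs : ‖z‖ < 1 := hz
    set δ : ℝ := (8 * (‖s‖ + 1))⁻¹ with hδdef
    have hδpos : 0 < δ := by positivity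
    set q : FormalMultilinearSeries ℂ ℂ ℂ :=
      FormalMultilinearSeries.ofScalars ℂ (fun m => P m s) with hqdef
    have hqcoeff : ∀ n, q.coeff n = P n s := by
      intro n
      rw [hqdef, FormalMultilinearSeries.coeff]
      rw [show (1 : Fin n → ℂ) = fun _ => (1:ℂ) from rfl]
      rw [FormalMultilinearSeries.ofScalars_apply_eq]
      simp
    have hq : HasFPowerSeriesAt (G s) q 0 := by
      rw [hasFPowerSeriesAt_iff]
      filter_upwards [Metric.ball_mem_nhds (0:ℂ) hδpos] with y hy
      have hy' : ‖y‖ < δ := by rwa [Metric.mem_ball, dist_zero_right] at hy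
      have h := hsmall s hy'
      have heq : (fun n : ℕ => y ^ n • q.coeff n) = fun n : ℕ => P n s * y ^ n := by
        funext n
        rw [hqcoeff n, smul_eq_mul]
        ring
      rw [heq, zero_add]
      exact h
    set R : NNReal := ⟨(‖z‖ + 1) / 2, by positivity⟩ with hRdef
    have hR0 : 0 < R := by
      apply NNReal.coe_pos.mp
      change (0:ℝ) < (‖z‖ + 1) / 2
      positivity
    have hzR : ‖z‖ < (R : ℝ) := by
      change ‖z‖ < (‖z‖ + 1) / 2
      linarith
    have hRlt : (R : ℝ) < 1 := by
      change (‖z‖ + 1) / 2 < (1:ℝ)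
      linarith
    have hclosed : Metric.closedBall (0:ℂ) R ⊆ Metric.ball (0:ℂ) 1 := by
      intro x hx
      rw [Metric.mem_closedBall, dist_zero_right] at hx
      rw [Metric.mem_ball, dist_zero_right]
      linarith
    have hball := (hdiff.mono hclosed).hasFPowerSeriesOnBall hR0
    have heq : q = cauchyPowerSeries (G s) 0 R :=
      hq.eq_formalMultilinearSeries hball.hasFPowerSeriesAt
    have hOn : HasFPowerSeriesOnBall (G s) q 0 R := by rw [heq]; exact hball
    have hmem : z ∈ EMetric.ball (0:ℂ) R := by
      change z ∈ Metric.eball (0:ℂ) R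
      rw [Metric.emetric_ball_nnreal, Metric.mem_ball, dist_zero_right]
      exact hzR
    have hsum := hOn.hasSum hmem
    have hsum' : HasSum (fun n => P n s * z ^ n) (G s z) := by
      have heq2 : (fun n : ℕ => q n fun _ => z) = fun n : ℕ => P n s * z ^ n := by
        funext n
        rw [hqdef, FormalMultilinearSeries.ofScalars_apply_eq, smul_eq_mul]
      rw [heq2, zero_add] at hsum
      exact hsum
    exact hsum'.tsum_eq.symm
end

section
/- For s complex with Re(s) > 0 and m ≥ 0, the Mellin transform ∫_0^∞ e^{-x} L_m(2x) x^{s-1} dx equals (Γ(s)/2) P_m(s), where L_m is the m-th Laguerre polynomial L_m(x) = ∑_{k=0}^m C(m,k) (-1)^k x^k / k! and P_m(s) = ∑_{k=0}^m C(m,k) (-1)^k 2^{k+1} (s)_k / k!. -/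
open MeasureTheory

noncomputable def Lag (m : ℕ) (x : ℝ) : ℝ :=
  ∑ k ∈ Finset.range (m + 1), (m.choose k : ℝ) * (-1) ^ k * x ^ k / (k.factorial : ℝ)

lemma gamma_add_nat (s : ℂ) (hs : 0 < s.re) (k : ℕ) :
    Complex.Gamma (s + k) = Complex.Gamma s * ∏ i ∈ Finset.range k, (s + i) := by
  induction k with
  | zero => simp
  | succ n ih =>
    have hne : s + (n : ℂ) ≠ 0 := by
      intro h
      have : (s + (n : ℂ)).re = 0 := by rw [h]; simp
      simp [Complex.add_re] at this
      have : (0:ℝ) ≤ (n:ℝ) := Nat.cast_nonneg n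
      linarith [hs]
    have h1 : s + ((n + 1 : ℕ) : ℂ) = (s + n) + 1 := by push_cast; ring
    rw [h1, Complex.Gamma_add_one _ hne, ih, Finset.prod_range_succ]
    ring

theorem stmt_11 (s : ℂ) (hs : 0 < s.re) (m : ℕ) :
    ∫ x in Set.Ioi (0:ℝ),
        ((Real.exp (-x) * Lag m (2 * x) : ℝ) : ℂ) * (x : ℂ) ^ (s - 1) =
      Complex.Gamma s / 2 * P m s := by
  have hre : ∀ k : ℕ, 0 < (s + k).re := by
    intro k
    simp [Complex.add_re]
    positivity
  have h1 : ∀ x ∈ Set.Ioi (0:ℝ),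
      ((Real.exp (-x) * Lag m (2 * x) : ℝ) : ℂ) * (x : ℂ) ^ (s - 1) =
      ∑ k ∈ Finset.range (m+1),
        ((m.choose k : ℂ) * (-1)^k * 2^k / (k.factorial : ℂ)) *
          ((Real.exp (-x) : ℂ) * (x:ℂ) ^ (s + k - 1)) := by
    intro x hx
    have hx0 : (x:ℂ) ≠ 0 := by
      exact_mod_cast ne_of_gt (Set.mem_Ioi.mp hx)
    simp only [Lag]
    push_cast
    rw [mul_comm]
    simp only [Finset.mul_sum]
    apply Finset.sum_congr rfl
    intro k _
    have hp : (x:ℂ) ^ (s + k - 1) = (x:ℂ)^(s-1) * (x:ℂ)^k := by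
      rw [← Complex.cpow_natCast, ← Complex.cpow_add _ _ hx0]
      ring_nf
    rw [hp, mul_pow]
    ring
  rw [setIntegral_congr_fun measurableSet_Ioi h1]
  rw [integral_finset_sum _ (fun k _ =>
    ((Complex.GammaIntegral_convergent (hre k)).const_mul _))]
  have h2 : ∀ k ∈ Finset.range (m+1),
      (∫ x in Set.Ioi (0:ℝ),
        ((m.choose k : ℂ) * (-1)^k * 2^k / (k.factorial : ℂ)) *
          ((Real.exp (-x) : ℂ) * (x:ℂ) ^ (s + k - 1)))
      = ((m.choose k : ℂ) * (-1)^k * 2^k / (k.factorial : ℂ)) *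
          (Complex.Gamma s * ∏ i ∈ Finset.range k, (s + i)) := by
    intro k _
    rw [integral_const_mul]
    congr 1
    rw [← gamma_add_nat s hs k, Complex.Gamma_eq_integral (hre k)]
    rfl
  rw [Finset.sum_congr rfl h2, P, Finset.mul_sum]
  refine Finset.sum_congr rfl fun k _ => ?_
  rw [pow_succ]
  ring
end

section
/- For every complex z with Re(z) > 0, ∫_0^∞ e^{-xz} (1/(e^x - 1) - 1/x) dx = log(z) - ψ(z) - 1/(2z) + 1/(2z) - 1/z, i.e. equals log z − ψ(z) − 1/z, where ψ = Γ'/Γ is the digamma function and log is the principal branch. -/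
open MeasureTheory Set Filter Topology

noncomputable def fker (x : ℝ) : ℝ := 1 / (Real.exp x - 1) - 1 / x

lemma fker_nonpos {x : ℝ} (hx : 0 < x) : fker x ≤ 0 := by
  have h1 : x < Real.exp x - 1 := by
    have := Real.add_one_lt_exp (x := x) hx.ne'
    linarith
  have h2 : 0 < x := hx
  unfold fker
  have : 1 / (Real.exp x - 1) ≤ 1 / x := by
    apply one_div_le_one_div_of_le h2 h1.le
  linarith

lemma fker_ge {x : ℝ} (hx : 0 < x) : -1 ≤ fker x := by
  have hex : 0 < Real.exp x - 1 := by
    have := Real.add_one_lt_exp (x := x) hx.ne'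
    linarith
  -- 1/x - 1/(e^x-1) ≤ 1  ⟺  e^x-1-x ≤ x(e^x-1) ⟺ e^x-1 ≤ x e^x ⟺ 1 - e^{-x} ≤ x
  have key : Real.exp x - 1 - x ≤ x * (Real.exp x - 1) := by
    have h : 1 - Real.exp (-x) ≤ x := by
      have := Real.add_one_le_exp (-x)
      linarith
    have h2 : (1 - Real.exp (-x)) * Real.exp x ≤ x * Real.exp x := by
      exact mul_le_mul_of_nonneg_right h (Real.exp_pos x).le
    rw [sub_mul, one_mul, ← Real.exp_add] at h2
    simp at h2
    nlinarith [Real.exp_pos x]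
  unfold fker
  rw [div_sub_div _ _ (ne_of_gt hex) hx.ne', neg_le, ← neg_div, div_le_one (by positivity)]
  nlinarith

lemma abs_fker_le_one {x : ℝ} (hx : 0 < x) : |fker x| ≤ 1 := by
  rw [abs_le]; exact ⟨fker_ge hx, (fker_nonpos hx).trans zero_le_one⟩

lemma fker_measurable : Measurable fker := by
  unfold fker; fun_prop

-- Laplace transform of a bounded function is integrable
lemma integrable_exp_mul_bdd {g : ℝ → ℂ} (hm : AEStronglyMeasurable g (volume.restrict (Ioi 0)))
    (hb : ∀ x ∈ Ioi (0:ℝ), ‖g x‖ ≤ 1) {z : ℂ} (hz : 0 < z.re) :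
    IntegrableOn (fun x : ℝ => Complex.exp (-x * z) * g x) (Ioi 0) := by
  have h1 : IntegrableOn (fun x : ℝ => Real.exp (-x * z.re)) (Ioi 0) := by
    simpa [neg_mul, mul_comm] using exp_neg_integrableOn_Ioi 0 hz
  refine Integrable.mono' h1 ?_ ?_
  · exact (Complex.continuous_exp.comp ((Complex.continuous_ofReal.neg.mul continuous_const))).aestronglyMeasurable.mul hm
  · filter_upwards [ae_restrict_mem measurableSet_Ioi] with x hx
    rw [norm_mul]
    calc ‖Complex.exp (-↑x * z)‖ * ‖g x‖ ≤ ‖Complex.exp (-↑x * z)‖ * 1 :=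
          mul_le_mul_of_nonneg_left (hb x hx) (norm_nonneg _)
      _ = Real.exp (-x * z.re) := by
          rw [mul_one, Complex.norm_exp]
          norm_num

lemma integral_cexp_Ioi {w : ℂ} (hw : 0 < w.re) :
    ∫ x in Ioi (0:ℝ), Complex.exp (-x * w) = 1 / w := by
  have hw0 : w ≠ 0 := fun h => by simp [h] at hw
  have hderiv : ∀ x ∈ Ici (0:ℝ), HasDerivAt (fun x : ℝ => -Complex.exp (-x * w) / w)
      (Complex.exp (-x * w)) x := by
    intro x _
    have h1 : HasDerivAt (fun x : ℝ => -x * w) (-w) x := by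
      simpa using ((Complex.ofRealCLM.hasDerivAt (x := x)).neg.mul_const w)
    have := (Complex.hasDerivAt_exp (-x * w)).comp x h1
    have h2 := ((this).neg.div_const w)
    convert h2 using 1
    · rfl
    · rfl
    field_simp
  have htend : Tendsto (fun x : ℝ => -Complex.exp (-x * w) / w) atTop (nhds 0) := by
    rw [show (0:ℂ) = -0 / w by simp]
    refine Tendsto.div_const ?_ w
    refine Tendsto.neg ?_
    have : Tendsto (fun x : ℝ => Real.exp (-x * w.re)) atTop (nhds 0) := by
      have h3 : Tendsto (fun x : ℝ => x * w.re) atTop atTop := Tendsto.atTop_mul_const hw tendsto_id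
      have h4 := Real.tendsto_exp_neg_atTop_nhds_zero.comp h3
      have h5 : ((fun x => Real.exp (-x)) ∘ fun x : ℝ => x * w.re)
          = fun x : ℝ => Real.exp (-x * w.re) := by
        ext x; simp [Function.comp, neg_mul]
      rwa [h5] at h4
    rw [tendsto_zero_iff_norm_tendsto_zero]
    convert this using 2 with x
    rw [Complex.norm_exp]
    norm_num
  have hint : IntegrableOn (fun x : ℝ => Complex.exp (-x * w)) (Ioi 0) := by
    have := integrable_exp_mul_bdd (g := fun _ => 1) aestronglyMeasurable_const
      (by intro x _; simp) hw
    simpa using this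
  have := integral_Ioi_of_hasDerivAt_of_tendsto' hderiv hint htend
  simp only [Complex.ofReal_zero, neg_zero, zero_mul, Complex.exp_zero] at this
  rw [this]
  ring

lemma hasDerivAt_aux (w : ℂ) (c : ℂ) (x : ℝ) :
    HasDerivAt (fun s : ℝ => Complex.exp (-(c + s) * w)) (-w * Complex.exp (-(c + x) * w)) x := by
  have h1 : HasDerivAt (fun s : ℝ => -(c + (s:ℂ)) * w) (-w) x := by
    have : HasDerivAt (fun s : ℝ => (c + (s:ℂ))) 1 x := by
      simpa using (Complex.ofRealCLM.hasDerivAt (x := x)).const_add c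
    simpa using (this.neg.mul_const w)
  simpa [mul_comm, Function.comp_def] using (Complex.hasDerivAt_exp (-(c + x) * w)).comp x h1

lemma inner_slice {z : ℂ} {x : ℝ} (hx : 0 < x) :
    ∫ s in Ioc (0:ℝ) 1, Complex.exp (-x * (z + s))
      = (Complex.exp (-x * z) - Complex.exp (-x * (z + 1))) / x := by
  have hx' : (x:ℂ) ≠ 0 := by exact_mod_cast hx.ne'
  rw [← intervalIntegral.integral_of_le (by norm_num : (0:ℝ) ≤ 1)]
  have hd : ∀ s ∈ Set.uIcc (0:ℝ) 1, HasDerivAt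
      (fun s : ℝ => -Complex.exp (-(z + s) * x) / x) (Complex.exp (-x * (z + s))) s := by
    intro s _
    have := ((hasDerivAt_aux (x:ℂ) z s).neg.div_const (x:ℂ))
    convert this using 1
    · rfl
    · rfl
    field_simp
  rw [intervalIntegral.integral_eq_sub_of_hasDerivAt hd]
  · push_cast
    field_simp
    ring_nf
  · apply ContinuousOn.intervalIntegrable
    fun_prop

lemma integral_log_slice {z : ℂ} (hz : 0 < z.re) :
    ∫ s in Ioc (0:ℝ) 1, 1 / (z + s) = Complex.log (z + 1) - Complex.log z := by
  rw [← intervalIntegral.integral_of_le (by norm_num : (0:ℝ) ≤ 1)]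
  have hd : ∀ s ∈ Set.uIcc (0:ℝ) 1, HasDerivAt
      (fun s : ℝ => Complex.log (z + s)) (1 / (z + s)) s := by
    intro s hs
    rw [Set.uIcc_of_le (by norm_num : (0:ℝ) ≤ 1)] at hs
    have hre : 0 < (z + s).re := by
      simp only [Complex.add_re, Complex.ofReal_re]
      linarith [hs.1]
    have hmem : (z + (s:ℂ)).re > 0 ∨ (z + (s:ℂ)).im ≠ 0 := Or.inl hre
    have hinner : HasDerivAt (fun s : ℝ => (z + (s:ℂ))) 1 s := by
      simpa using (Complex.ofRealCLM.hasDerivAt (x := s)).const_add z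
    have := (Complex.hasDerivAt_log hmem).comp s hinner
    simpa [one_div, Function.comp_def] using this
  rw [intervalIntegral.integral_eq_sub_of_hasDerivAt hd]
  · push_cast; ring_nf
  · apply ContinuousOn.intervalIntegrable
    rw [Set.uIcc_of_le (by norm_num : (0:ℝ) ≤ 1)]
    apply ContinuousOn.div continuousOn_const
      ((continuous_const.add Complex.continuous_ofReal).continuousOn)
    intro t ht h
    have h2 : (z + (t:ℂ)).re = 0 := by rw [show z + (t:ℂ) = 0 from h]; simp
    simp only [Complex.add_re, Complex.ofReal_re] at h2
    linarith [ht.1]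

lemma prodInt {z : ℂ} (hz : 0 < z.re) :
    Integrable (fun p : ℝ × ℝ => Complex.exp (-p.1 * (z + p.2)))
      ((volume.restrict (Ioi (0:ℝ))).prod (volume.restrict (Ioc (0:ℝ) 1))) := by
    have hm : AEStronglyMeasurable (fun p : ℝ × ℝ => Complex.exp (-p.1 * (z + p.2)))
        ((volume.restrict (Ioi (0:ℝ))).prod (volume.restrict (Ioc (0:ℝ) 1))) := by
      apply Continuous.aestronglyMeasurable
      fun_prop
    refine Integrable.mono' (g := fun p : ℝ × ℝ => Real.exp (-p.1 * z.re) * 1) ?_ hm ?_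
    · have h1 : IntegrableOn (fun x : ℝ => Real.exp (-x * z.re)) (Ioi 0) := by
        simpa [neg_mul, mul_comm] using exp_neg_integrableOn_Ioi 0 hz
      exact h1.mul_prod (integrable_const 1)
    · rw [Measure.prod_restrict]
      filter_upwards [ae_restrict_mem (measurableSet_Ioi.prod measurableSet_Ioc)] with p hp
      obtain ⟨hp1, hp2⟩ := hp
      rw [Complex.norm_exp, mul_one]
      apply Real.exp_le_exp.mpr
      have hx : (0:ℝ) ≤ p.1 := (le_of_lt hp1)
      have hs : (0:ℝ) ≤ p.2 := (le_of_lt hp2.1)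
      simp only [Complex.neg_re, Complex.neg_im, Complex.mul_re, Complex.ofReal_re,
        Complex.ofReal_im, Complex.add_re, Complex.add_im]
      nlinarith

lemma frullani {z : ℂ} (hz : 0 < z.re) :
    ∫ x in Ioi (0:ℝ), (Complex.exp (-x * z) - Complex.exp (-x * (z + 1))) / x
      = Complex.log (z + 1) - Complex.log z := by
  have hInt := prodInt hz
  calc ∫ x in Ioi (0:ℝ), (Complex.exp (-x * z) - Complex.exp (-x * (z + 1))) / x
      = ∫ x in Ioi (0:ℝ), ∫ s in Ioc (0:ℝ) 1, Complex.exp (-x * (z + s)) := by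
        apply setIntegral_congr_fun measurableSet_Ioi
        intro x hx
        exact (inner_slice hx).symm
    _ = ∫ s in Ioc (0:ℝ) 1, ∫ x in Ioi (0:ℝ), Complex.exp (-x * (z + s)) :=
        integral_integral_swap hInt
    _ = ∫ s in Ioc (0:ℝ) 1, 1 / (z + s) := by
        apply setIntegral_congr_fun measurableSet_Ioc
        intro s hs
        apply integral_cexp_Ioi
        simp only [Complex.add_re, Complex.ofReal_re]
        linarith [hs.1]
    _ = Complex.log (z + 1) - Complex.log z := integral_log_slice hz

lemma integrable_quot {z : ℂ} (hz : 0 < z.re) :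
    IntegrableOn (fun x : ℝ => (Complex.exp (-x * z) - Complex.exp (-x * (z + 1))) / x)
      (Ioi 0) := by
  have h := (prodInt hz).integral_prod_left
  refine h.congr ?_
  filter_upwards [ae_restrict_mem measurableSet_Ioi] with x hx
  exact inner_slice hx

noncomputable def Fc (z : ℂ) : ℂ :=
  ∫ x in Ioi (0:ℝ), Complex.exp (-x * z) * ((fker x : ℝ) : ℂ)

lemma integrable_Fc {z : ℂ} (hz : 0 < z.re) :
    IntegrableOn (fun x : ℝ => Complex.exp (-x * z) * ((fker x : ℝ) : ℂ)) (Ioi 0) := by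
  apply integrable_exp_mul_bdd _ _ hz
  · exact (Complex.measurable_ofReal.comp fker_measurable).aestronglyMeasurable
  · intro x hx
    rw [Complex.norm_real]
    exact abs_fker_le_one hx

lemma Fc_rec {z : ℂ} (hz : 0 < z.re) :
    Fc z - Fc (z + 1) = 1 / (z + 1) - (Complex.log (z + 1) - Complex.log z) := by
  have hz1 : 0 < (z + 1).re := by simp [Complex.add_re]; linarith
  have h1 := integrable_Fc hz
  have h2 := integrable_Fc hz1
  have h3 : IntegrableOn (fun x : ℝ => Complex.exp (-x * (z + 1))) (Ioi 0) := by
    simpa using integrable_exp_mul_bdd (g := fun _ => 1) aestronglyMeasurable_const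
      (by intro x _; simp) hz1
  have h4 := integrable_quot hz
  rw [Fc, Fc, ← integral_sub h1 h2]
  have key : ∀ x ∈ Ioi (0:ℝ),
      Complex.exp (-x * z) * ((fker x : ℝ) : ℂ) - Complex.exp (-x * (z + 1)) * ((fker x : ℝ) : ℂ)
        = Complex.exp (-x * (z + 1)) - (Complex.exp (-x * z) - Complex.exp (-x * (z + 1))) / x := by
    intro x hx
    have hx0 : (x:ℂ) ≠ 0 := by exact_mod_cast (ne_of_gt hx)
    have hc1 : Complex.exp x - 1 ≠ 0 := by
      intro h
      have h7 : Complex.exp x = 1 := by linear_combination h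
      rw [← Complex.ofReal_exp] at h7
      have h8 : Real.exp x = 1 := by exact_mod_cast h7
      have h9 := Real.add_one_lt_exp (ne_of_gt hx)
      rw [h8] at h9
      have : x ∈ Ioi (0:ℝ) := hx
      simp only [mem_Ioi] at this
      linarith
    have hfk : ((fker x : ℝ) : ℂ) = 1 / (Complex.exp x - 1) - 1 / x := by
      unfold fker
      push_cast
      ring
    have hsplit : Complex.exp (-x * (z + 1)) = Complex.exp (-x * z) * Complex.exp (-(x:ℂ)) := by
      rw [← Complex.exp_add]; ring_nf
    have hinv : Complex.exp (-(x:ℂ)) * Complex.exp x = 1 := by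
      rw [← Complex.exp_add]; simp
    have hc0 : Complex.exp (x:ℂ) ≠ 0 := Complex.exp_ne_zero _
    rw [hfk, hsplit, Complex.exp_neg]
    field_simp
  rw [setIntegral_congr_fun measurableSet_Ioi key, integral_sub h3 h4,
    integral_cexp_Ioi hz1, frullani hz]

noncomputable def digamma (z : ℂ) : ℂ := deriv Complex.Gamma z / Complex.Gamma z

lemma ne_neg_nat {z : ℂ} (hz : 0 < z.re) : ∀ m : ℕ, z ≠ -m := by
  intro m h
  rw [h] at hz
  simp only [Complex.neg_re, Complex.natCast_re] at hz
  have : (0:ℝ) ≤ m := Nat.cast_nonneg m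
  linarith

lemma deriv_Gamma_add_one {z : ℂ} (hz : 0 < z.re) :
    deriv Complex.Gamma (z + 1) = Complex.Gamma z + z * deriv Complex.Gamma z := by
  have hz1 : 0 < (z + 1).re := by simp [Complex.add_re]; linarith
  have hG : HasDerivAt Complex.Gamma (deriv Complex.Gamma z) z :=
    (Complex.differentiableAt_Gamma z (ne_neg_nat hz)).hasDerivAt
  have h1 : HasDerivAt (fun w => Complex.Gamma (w + 1)) (deriv Complex.Gamma (z + 1)) z := by
    have := ((Complex.differentiableAt_Gamma (z+1) (ne_neg_nat hz1)).hasDerivAt.comp z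
      ((hasDerivAt_id z).add_const 1))
    simpa [Function.comp_def] using this
  have h2 : HasDerivAt (fun w => w * Complex.Gamma w)
      (Complex.Gamma z + z * deriv Complex.Gamma z) z := by
    have := (hasDerivAt_id z).mul hG
    simpa [add_comm, Pi.mul_def] using this
  have heq : (fun w => Complex.Gamma (w + 1)) =ᶠ[nhds z] (fun w => w * Complex.Gamma w) := by
    have hopen : IsOpen {w : ℂ | 0 < w.re} := isOpen_lt continuous_const Complex.continuous_re
    filter_upwards [hopen.mem_nhds hz] with w hw
    exact Complex.Gamma_add_one w (fun h => by rw [h] at hw; simp at hw)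
  exact (h1.congr_of_eventuallyEq heq.symm).unique h2

lemma digamma_add_one {z : ℂ} (hz : 0 < z.re) :
    digamma (z + 1) = digamma z + 1 / z := by
  have hz0 : z ≠ 0 := fun h => by simp [h] at hz
  have hΓ : Complex.Gamma z ≠ 0 := Complex.Gamma_ne_zero_of_re_pos hz
  unfold digamma
  rw [deriv_Gamma_add_one hz, Complex.Gamma_add_one z hz0]
  field_simp
  ring

lemma deriv_Gamma_ofReal {s : ℝ} (hs : 0 < s) :
    deriv Complex.Gamma (s : ℂ) = ((deriv Real.Gamma s : ℝ) : ℂ) := by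
  have hne : ∀ m : ℕ, (s:ℂ) ≠ -m := ne_neg_nat (by simpa using hs)
  have hne' : ∀ m : ℕ, s ≠ -(m:ℝ) := by
    intro m h; have : (0:ℝ) ≤ m := Nat.cast_nonneg m; linarith [hs, h ▸ hs]
  have h1 : HasDerivAt (fun x : ℝ => Complex.Gamma (x : ℂ))
      (deriv Complex.Gamma (s : ℂ)) s :=
    (Complex.differentiableAt_Gamma _ hne).hasDerivAt.comp_ofReal
  have h2 : HasDerivAt (fun x : ℝ => ((Real.Gamma x : ℝ) : ℂ))
      ((deriv Real.Gamma s : ℝ) : ℂ) s :=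
    (Real.differentiableAt_Gamma hne').hasDerivAt.ofReal_comp
  have heq : (fun x : ℝ => Complex.Gamma (x : ℂ)) = fun x : ℝ => ((Real.Gamma x : ℝ) : ℂ) := by
    ext x; exact Complex.Gamma_ofReal x
  rw [heq] at h1
  exact h1.unique h2

lemma digamma_ofReal {s : ℝ} (hs : 0 < s) :
    digamma (s : ℂ) = ((deriv Real.Gamma s / Real.Gamma s : ℝ) : ℂ) := by
  unfold digamma
  rw [deriv_Gamma_ofReal hs, Complex.Gamma_ofReal]
  push_cast
  ring

-- real digamma sandwich: for x > 0, log x ≤ ψ(x+1) ≤ log (x+1)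
lemma psi_sandwich {x : ℝ} (hx : 0 < x) :
    Real.log x ≤ deriv Real.Gamma (x+1) / Real.Gamma (x+1) ∧
      deriv Real.Gamma (x+1) / Real.Gamma (x+1) ≤ Real.log (x+1) := by
  set f := Real.log ∘ Real.Gamma with hf
  have hc : ConvexOn ℝ (Ioi 0) f := Real.convexOn_log_Gamma
  have hder : ∀ {y : ℝ}, 0 < y → HasDerivAt f (deriv Real.Gamma y / Real.Gamma y) y := by
    intro y hy
    have hne : ∀ m : ℕ, y ≠ -(m:ℝ) := by
      intro m h; have : (0:ℝ) ≤ m := Nat.cast_nonneg m; linarith [h ▸ hy]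
    have h1 : HasDerivAt Real.Gamma (deriv Real.Gamma y) y :=
      (Real.differentiableAt_Gamma hne).hasDerivAt
    have h2 := (Real.hasDerivAt_log (Real.Gamma_pos_of_pos hy).ne').comp y h1
    simpa [hf, div_eq_inv_mul] using h2
  have hdiff : ∀ {y : ℝ}, 0 < y → DifferentiableAt ℝ f y := fun hy => (hder hy).differentiableAt
  have hrec : ∀ {y : ℝ}, 0 < y → f (y + 1) = f y + Real.log y := by
    intro y hy
    simp only [hf, Function.comp_apply, Real.Gamma_add_one hy.ne']
    rw [Real.log_mul hy.ne' (Real.Gamma_pos_of_pos hy).ne']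
    ring
  constructor
  · have hslope := hc.slope_le_deriv (mem_Ioi.mpr hx) (mem_Ioi.mpr (by linarith : (0:ℝ) < x + 1))
      (by linarith) (hdiff (by linarith))
    rw [(hder (by linarith : (0:ℝ) < x+1)).deriv] at hslope
    refine le_trans (le_of_eq ?_) hslope
    rw [slope_def_field, hrec hx]
    field_simp
    ring
  · have hslope := hc.deriv_le_slope (mem_Ioi.mpr (by linarith : (0:ℝ) < x+1))
      (mem_Ioi.mpr (by linarith : (0:ℝ) < x + 2)) (by linarith) (hdiff (by linarith))
    rw [(hder (by linarith : (0:ℝ) < x+1)).deriv] at hslope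
    refine hslope.trans (le_of_eq ?_)
    rw [slope_def_field, show x + 2 = (x + 1) + 1 by ring, hrec (by linarith : (0:ℝ) < x+1)]
    field_simp
    ring

noncomputable def Hc (z : ℂ) : ℂ := Fc z - (Complex.log z - digamma z - 1 / z)

lemma Hc_rec {z : ℂ} (hz : 0 < z.re) : Hc (z + 1) = Hc z := by
  unfold Hc
  rw [digamma_add_one hz]
  linear_combination -(Fc_rec hz)

lemma Hc_add_nat {z : ℂ} (hz : 0 < z.re) (n : ℕ) : Hc (z + n) = Hc z := by
  induction n with
  | zero => simp
  | succ n ih =>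
    have hzn : 0 < (z + n).re := by
      simp only [Complex.add_re, Complex.natCast_re]
      have : (0:ℝ) ≤ n := Nat.cast_nonneg n
      linarith
    have := Hc_rec hzn
    rw [show z + (n:ℂ) + 1 = z + (n+1 : ℕ) by push_cast; ring] at this
    rw [this, ih]

lemma integral_exp_neg_mul_Ioi' {c : ℝ} (hc : 0 < c) :
    ∫ x in Ioi (0:ℝ), Real.exp (-x * c) = 1 / c := by
  have hderiv : ∀ x ∈ Ici (0:ℝ), HasDerivAt (fun x : ℝ => -Real.exp (-x * c) / c)
      (Real.exp (-x * c)) x := by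
    intro x _
    have h1 : HasDerivAt (fun x : ℝ => -x * c) (-c) x := by
      simpa using (hasDerivAt_id x).neg.mul_const c
    have := ((Real.hasDerivAt_exp (-x * c)).comp x h1).neg.div_const c
    convert this using 1
    · rfl
    · rfl
    · rfl
    field_simp
  have htend : Tendsto (fun x : ℝ => -Real.exp (-x * c) / c) atTop (nhds 0) := by
    rw [show (0:ℝ) = -0 / c by simp]
    refine Tendsto.div_const (Tendsto.neg ?_) c
    have h3 : Tendsto (fun x : ℝ => x * c) atTop atTop := Tendsto.atTop_mul_const hc tendsto_id
    have h4 := Real.tendsto_exp_neg_atTop_nhds_zero.comp h3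
    have h5 : ((fun x => Real.exp (-x)) ∘ fun x : ℝ => x * c)
        = fun x : ℝ => Real.exp (-x * c) := by
      ext x; simp [Function.comp, neg_mul]
    rwa [h5] at h4
  have hint : IntegrableOn (fun x : ℝ => Real.exp (-x * c)) (Ioi 0) := by
    simpa [neg_mul, mul_comm] using exp_neg_integrableOn_Ioi 0 hc
  have := integral_Ioi_of_hasDerivAt_of_tendsto' hderiv hint htend
  rw [this]
  rw [show (-0:ℝ) * c = 0 by ring, Real.exp_zero]
  ring

lemma norm_Fc_le {z : ℂ} (hz : 0 < z.re) : ‖Fc z‖ ≤ 1 / z.re := by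
  rw [Fc, ← integral_exp_neg_mul_Ioi' hz]
  refine norm_integral_le_of_norm_le ?_ ?_
  · exact (by simpa [neg_mul, mul_comm] using exp_neg_integrableOn_Ioi 0 hz : IntegrableOn (fun x : ℝ => Real.exp (-x * z.re)) (Ioi 0))
  · filter_upwards [ae_restrict_mem measurableSet_Ioi] with x hx
    rw [norm_mul, Complex.norm_real, Complex.norm_exp]
    have h1 : (-↑x * z).re = -x * z.re := by
      simp [Complex.mul_re]
    rw [h1]
    calc Real.exp (-x * z.re) * |fker x| ≤ Real.exp (-x * z.re) * 1 :=
          mul_le_mul_of_nonneg_left (abs_fker_le_one hx) (Real.exp_pos _).le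
      _ = Real.exp (-x * z.re) := mul_one _

lemma Hc_real_eq {s : ℝ} (hs : 0 < s) :
    Hc (s : ℂ) = Fc s - ((Real.log s - deriv Real.Gamma s / Real.Gamma s - 1 / s : ℝ) : ℂ) := by
  unfold Hc
  rw [digamma_ofReal hs]
  rw [Complex.ofReal_sub, Complex.ofReal_sub, Complex.ofReal_log hs.le]
  push_cast
  ring

lemma Hc_real_zero {t : ℝ} (ht : 0 < t) : Hc ((t : ℝ) : ℂ) = 0 := by
  set ψ : ℝ → ℝ := fun s => deriv Real.Gamma s / Real.Gamma s with hψ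
  have hconst : ∀ n : ℕ, Hc (((t + (n+1) : ℝ)) : ℂ) = Hc (t : ℂ) := by
    intro n
    have h := Hc_add_nat (z := (t:ℂ)) (by simpa using ht) (n+1)
    rw [← h]
    congr 1
    push_cast
    ring
  have hbnd : ∀ n : ℕ, ‖Hc (((t + (n+1) : ℝ)) : ℂ)‖
      ≤ 2 / (t + (n+1)) + (Real.log (t + (n+1)) - Real.log (t + n)) := by
    intro n
    have hn0 : (0:ℝ) ≤ n := Nat.cast_nonneg n
    have hs : (0:ℝ) < t + (n+1) := by linarith
    have hx : (0:ℝ) < t + n := by linarith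
    rw [Hc_real_eq hs]
    have h1 : ‖Fc ((t + (n+1) : ℝ) : ℂ)‖ ≤ 1 / (t + (n+1)) := by
      have := norm_Fc_le (z := ((t + (n+1) : ℝ) : ℂ)) (by simpa using hs)
      simpa using this
    have hsand := psi_sandwich hx
    rw [show (t + (n:ℝ)) + 1 = t + (n+1) by ring] at hsand
    have h2 : |Real.log (t + (n+1)) - ψ (t + (n+1)) - 1 / (t + (n+1))|
        ≤ (Real.log (t + (n+1)) - Real.log (t + n)) + 1 / (t + (n+1)) := by
      rw [abs_le]
      constructor
      · have : ψ (t + (n+1)) ≤ Real.log (t + (n+1)) := hsand.2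
        have hpos : 0 < 1 / (t + (n+1)) := by positivity
        have hlog : Real.log (t + n) ≤ Real.log (t + (n+1)) :=
          Real.log_le_log hx (by linarith)
        nlinarith [hsand.1]
      · have := hsand.1
        have hpos : 0 < 1 / (t + (n+1)) := by positivity
        nlinarith
    calc ‖Fc ((t + (n+1) : ℝ) : ℂ) - ((Real.log (t + (n+1)) - ψ (t + (n+1))
            - 1 / (t + (n+1)) : ℝ) : ℂ)‖
        ≤ ‖Fc ((t + (n+1) : ℝ) : ℂ)‖ + ‖((Real.log (t + (n+1)) - ψ (t + (n+1))
            - 1 / (t + (n+1)) : ℝ) : ℂ)‖ := norm_sub_le _ _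
      _ ≤ 1 / (t + (n+1)) + ((Real.log (t + (n+1)) - Real.log (t + n)) + 1 / (t + (n+1))) := by
          refine add_le_add h1 ?_
          rw [Complex.norm_real]
          exact h2
      _ = 2 / (t + (n+1)) + (Real.log (t + (n+1)) - Real.log (t + n)) := by ring
  -- the bound tends to 0
  have htend : Tendsto (fun n : ℕ => 2 / (t + (n+1))
      + (Real.log (t + (n+1)) - Real.log (t + n))) atTop (nhds 0) := by
    have hAt : Tendsto (fun n : ℕ => t + ((n:ℝ)+1)) atTop atTop := by
      apply tendsto_atTop_add_const_left
      apply tendsto_atTop_add_const_right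
      exact tendsto_natCast_atTop_atTop
    have h1 : Tendsto (fun n : ℕ => 2 / (t + ((n:ℝ)+1))) atTop (nhds 0) := by
      simpa [div_eq_mul_inv] using (tendsto_inv_atTop_zero.comp hAt).const_mul (2:ℝ)
    have h2 : Tendsto (fun n : ℕ => Real.log (t + ((n:ℝ)+1)) - Real.log (t + n)) atTop (nhds 0) := by
      have hq : ∀ n : ℕ, Real.log (t + ((n:ℝ)+1)) - Real.log (t + n)
          = Real.log ((t + ((n:ℝ)+1)) / (t + n)) := by
        intro n
        have hn0 : (0:ℝ) ≤ n := Nat.cast_nonneg n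
        rw [Real.log_div (by linarith) (by linarith)]
      simp_rw [hq]
      have hq2 : ∀ n : ℕ, (t + ((n:ℝ)+1)) / (t + (n:ℝ)) = 1 + 1 / (t + (n:ℝ)) := by
        intro n
        have hn0 : (0:ℝ) ≤ n := Nat.cast_nonneg n
        field_simp
        ring
      simp_rw [hq2]
      have hAt2 : Tendsto (fun n : ℕ => t + (n:ℝ)) atTop atTop := by
        apply tendsto_atTop_add_const_left
        exact tendsto_natCast_atTop_atTop
      have h3 : Tendsto (fun n : ℕ => 1 + 1 / (t + (n:ℝ))) atTop (nhds 1) := by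
        have := (tendsto_inv_atTop_zero.comp hAt2)
        have h4 : Tendsto (fun n : ℕ => 1/(t + (n:ℝ))) atTop (nhds 0) := by
          simpa [one_div, Function.comp_def] using this
        simpa using tendsto_const_nhds.add h4
      have h5 := (Real.continuousAt_log one_ne_zero).tendsto.comp h3
      simpa [Function.comp_def] using h5
    simpa using h1.add h2
  have : Tendsto (fun n : ℕ => Hc (((t + (n+1) : ℝ)) : ℂ)) atTop (nhds 0) := by
    rw [tendsto_zero_iff_norm_tendsto_zero]
    exact squeeze_zero (fun n => norm_nonneg _) hbnd htend
  simp_rw [hconst] at this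
  exact tendsto_nhds_unique tendsto_const_nhds this

lemma integrable_bound_deriv {c : ℝ} (hc : 0 < c) :
    IntegrableOn (fun x : ℝ => x * Real.exp (-x * c)) (Ioi 0) := by
  have h1 : IntegrableOn (fun x : ℝ => (2/c) * Real.exp (-x * (c/2))) (Ioi 0) := by
    apply Integrable.const_mul
    exact (by simpa [neg_mul, mul_comm] using exp_neg_integrableOn_Ioi 0 (by linarith : 0 < c/2) : IntegrableOn (fun x : ℝ => Real.exp (-x * (c/2))) (Ioi 0))
  refine Integrable.mono' h1 ?_ ?_
  · exact (continuous_id.mul (Real.continuous_exp.comp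
      (continuous_id.neg.mul continuous_const))).aestronglyMeasurable
  · filter_upwards [ae_restrict_mem measurableSet_Ioi] with x hx
    have hx0 : (0:ℝ) < x := hx
    rw [Real.norm_eq_abs, abs_of_nonneg (by positivity)]
    have key : x ≤ (2/c) * Real.exp (x * (c/2)) := by
      have h2 : x * (c/2) ≤ Real.exp (x * (c/2)) := by
        linarith [Real.add_one_le_exp (x * (c/2))]
      calc x = (2/c) * (x * (c/2)) := by field_simp
        _ ≤ (2/c) * Real.exp (x * (c/2)) := by
            apply mul_le_mul_of_nonneg_left h2 (by positivity)
    calc x * Real.exp (-x * c) ≤ ((2/c) * Real.exp (x * (c/2))) * Real.exp (-x * c) :=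
          mul_le_mul_of_nonneg_right key (Real.exp_pos _).le
      _ = (2/c) * Real.exp (-x * (c/2)) := by
          rw [mul_assoc, ← Real.exp_add]
          ring_nf
  
lemma Fc_differentiableAt {z₀ : ℂ} (hz : 0 < z₀.re) : DifferentiableAt ℂ Fc z₀ := by
  set ε : ℝ := z₀.re / 2 with hε
  have hε0 : 0 < ε := by positivity
  have hmeas : ∀ z : ℂ, AEStronglyMeasurable (fun x : ℝ => Complex.exp (-x * z) * ((fker x : ℝ) : ℂ))
      (volume.restrict (Ioi 0)) := by
    intro z
    exact ((Complex.continuous_exp.comp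
      (Complex.continuous_ofReal.neg.mul continuous_const)).aestronglyMeasurable).mul
      ((Complex.measurable_ofReal.comp fker_measurable).aestronglyMeasurable)
  have key := hasDerivAt_integral_of_dominated_loc_of_deriv_le (hs := Metric.ball_mem_nhds z₀ hε0)
    (F := fun z (x : ℝ) => Complex.exp (-x * z) * ((fker x : ℝ) : ℂ))
    (F' := fun z (x : ℝ) => (-x) * Complex.exp (-x * z) * ((fker x : ℝ) : ℂ))
    (x₀ := z₀)
    (bound := fun x => x * Real.exp (-x * ε))
    (Filter.Eventually.of_forall hmeas) (integrable_Fc hz)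
    (((Complex.continuous_ofReal.neg.mul (Complex.continuous_exp.comp
      (Complex.continuous_ofReal.neg.mul continuous_const))).aestronglyMeasurable).mul
      ((Complex.measurable_ofReal.comp fker_measurable).aestronglyMeasurable))
    ?_ (integrable_bound_deriv hε0) ?_
  · exact key.2.differentiableAt
  · filter_upwards [ae_restrict_mem measurableSet_Ioi] with x hx z hzball
    have hx0 : (0:ℝ) < x := hx
    have hre : ε ≤ z.re := by
      have h2 : |z.re - z₀.re| ≤ ‖z - z₀‖ := by
        rw [← Complex.sub_re]
        exact Complex.abs_re_le_norm _
      have h3 : ‖z - z₀‖ < ε := by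
        rwa [Metric.mem_ball, Complex.dist_eq] at hzball
      have := abs_le.mp (le_of_lt (lt_of_le_of_lt h2 h3))
      simp only [hε] at *
      linarith [this.1]
    have h4 : ((-(x:ℂ)) * z).re = -x * z.re := by simp [Complex.mul_re]
    simp only [norm_mul, norm_neg, Complex.norm_real, Complex.norm_exp,
      h4, Real.norm_eq_abs, abs_of_pos hx0]
    calc x * Real.exp (-x * z.re) * |fker x| ≤ x * Real.exp (-x * z.re) * 1 := by
          apply mul_le_mul_of_nonneg_left (abs_fker_le_one hx0) (by positivity)
      _ = x * Real.exp (-x * z.re) := mul_one _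
      _ ≤ x * Real.exp (-x * ε) := by
          apply mul_le_mul_of_nonneg_left _ hx0.le
          apply Real.exp_le_exp.mpr
          nlinarith
  · filter_upwards [ae_restrict_mem measurableSet_Ioi] with x hx z hzball
    have h6 : HasDerivAt (fun z : ℂ => -(x:ℂ) * z) (-(x:ℂ)) z := by
      simpa using (hasDerivAt_id z).const_mul (-(x:ℂ))
    have h7 := ((Complex.hasDerivAt_exp ((-(x:ℂ)) * z)).comp z h6).mul_const ((fker x : ℝ) : ℂ)
    convert h7 using 1
    · rfl
    · rfl
    ring

lemma final_eq {z : ℂ} (hz : 0 < z.re) :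
    Fc z = Complex.log z - digamma z - 1 / z := by
  set U : Set ℂ := {w : ℂ | 0 < w.re} with hU
  have hUopen : IsOpen U := isOpen_lt continuous_const Complex.continuous_re
  set G : ℂ → ℂ := fun w => Complex.log w - digamma w - 1 / w with hG
  have hFan : AnalyticOnNhd ℂ Fc U := by
    apply DifferentiableOn.analyticOnNhd _ hUopen
    exact fun w hw => (Fc_differentiableAt hw).differentiableWithinAt
  have hGamma_an : AnalyticOnNhd ℂ Complex.Gamma U := by
    apply DifferentiableOn.analyticOnNhd _ hUopen
    exact fun w hw => (Complex.differentiableAt_Gamma w (ne_neg_nat hw)).differentiableWithinAt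
  have hGan : AnalyticOnNhd ℂ G U := by
    intro w hw
    have hw0 : w ≠ 0 := fun h => by rw [h] at hw; simp [hU] at hw
    have hlog : AnalyticAt ℂ Complex.log w := analyticAt_clog (Or.inl hw)
    have hdg : AnalyticAt ℂ digamma w := by
      have h1 : AnalyticAt ℂ (deriv Complex.Gamma) w := hGamma_an.deriv w hw
      exact h1.div (hGamma_an w hw) (Complex.Gamma_ne_zero_of_re_pos hw)
    have hinv : AnalyticAt ℂ (fun w : ℂ => 1 / w) w :=
      (analyticAt_const (v := (1:ℂ))).div (analyticAt_id) hw0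
    exact (hlog.sub hdg).sub hinv
  have hpre : IsPreconnected U := (convex_halfSpace_re_gt 0).isPreconnected
  have h1U : (1:ℂ) ∈ U := by simp [hU]
  have hfreq : ∃ᶠ w in nhdsWithin (1:ℂ) {(1:ℂ)}ᶜ, Fc w = G w := by
    have htendsto : Tendsto (fun n : ℕ => ((1 + 1/(n+1) : ℝ) : ℂ)) atTop
        (nhdsWithin (1:ℂ) {(1:ℂ)}ᶜ) := by
      apply tendsto_nhdsWithin_of_tendsto_nhds_of_eventually_within
      · have hre : Tendsto (fun n : ℕ => (1 + 1/((n:ℝ)+1) : ℝ)) atTop (nhds 1) := by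
          have h1 : Tendsto (fun n : ℕ => 1/((n:ℝ)+1)) atTop (nhds 0) :=
            tendsto_one_div_add_atTop_nhds_zero_nat
          simpa using tendsto_const_nhds.add h1
        have h2 := (Complex.continuous_ofReal.tendsto 1).comp hre
        have h3 : (Complex.ofReal ∘ fun n : ℕ => (1 + 1/((n:ℝ)+1)))
            = fun n : ℕ => ((1 + 1/((n:ℝ)+1) : ℝ) : ℂ) := rfl
        rw [h3] at h2
        simpa using h2
      · filter_upwards with n
        simp only [mem_compl_iff, mem_singleton_iff]
        intro h
        have : (1 + 1/((n:ℝ)+1) : ℝ) = 1 := by exact_mod_cast h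
        have hn : (0:ℝ) < 1/((n:ℝ)+1) := by positivity
        linarith
    apply htendsto.frequently
    apply Filter.Eventually.frequently
    filter_upwards with n
    have hpos : (0:ℝ) < 1 + 1/((n:ℝ)+1) := by positivity
    have h0 := Hc_real_zero hpos
    unfold Hc at h0
    have := sub_eq_zero.mp h0
    simpa [hG] using this
  have := hFan.eqOn_of_preconnected_of_frequently_eq hGan hpre h1U hfreq
  exact this hz

theorem stmt_18 (z : ℂ) (hz : 0 < z.re) :
    ∫ x in Set.Ioi (0:ℝ),
        Complex.exp (-(x : ℂ) * z) * ((1 / (Real.exp x - 1) - 1 / x : ℝ) : ℂ) =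
      Complex.log z - digamma z - 1 / z := by
  have := final_eq hz
  rw [← this]
  rfl
end
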